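/- Define S_{T,2} := (2/T) ∑_{k=2}^{⌊T/2⌋} p_{ω_k}·conj(p_{ω_{k−1}}) with Fourier frequencies ω_k := 2πk/T. Then for every T ≥ 1, √T · E|S_{T,2}| ≤ 7Q / (2π)², where Q := ∑_{t₁,t₂,t₃∈ℤ} |E[Y_{t₁} Z_{t₂} Y_{t₃} Z_0]| is assumed finite. -/

import Mathlib

/-!
Pointwise `‖p_ω conj p_ω'‖ ≤ (‖p_ω‖² + ‖p_ω'‖²) / 2`, so `E‖S_{T,2}‖ ≤ (2/T) ⌊T/2⌋ sup_ω E‖p_ω‖²`.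
Expanding `‖p_ω‖²` gives a fourfold sum over `t₁, …, t₄ < T` of mixed fourth moments times
unimodular phases. By stationarity, the moments with a fixed `t₄` are moments
`E[Y_{u₁} Z_{u₂} Y_{u₃} Z_0]` at pairwise distinct `(u₁, u₂, u₃) = (t₁ - t₄, t₂ - t₄, t₃ - t₄)`, so
`E‖p_ω‖² ≤ T Q / (2πT)²`. Hence `E‖S_{T,2}‖ ≤ Q / ((2π)² T)`, and `√T ≤ T` finishes.
-/

open MeasureTheory Real
open scoped ComplexConjugate

noncomputable section

open Finset

instance ENNReal.holderTriple_four_four_two : ENNReal.HolderTriple 4 4 2 := by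
  rw [ENNReal.holderTriple_iff, ← ENNReal.add_halves (2 : ENNReal)⁻¹, ENNReal.div_eq_inv_mul,
    ← ENNReal.mul_inv (by simp) (by simp)]
  norm_num

lemma sum_mul_sum_mul_sum_mul_sum {ι R : Type*} [CommSemiring R] (s : Finset ι)
    (a b c d : ι → R) :
    (∑ i ∈ s, a i) * (∑ i ∈ s, b i) * (∑ i ∈ s, c i) * (∑ i ∈ s, d i) =
      ∑ q ∈ (s ×ˢ s ×ˢ s) ×ˢ s, a q.1.1 * b q.1.2.1 * c q.1.2.2 * d q.2 := by
  simp only [sum_product_right, sum_mul, mul_sum]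

lemma norm_sq_sum_mul_sum {ι : Type*} (s : Finset ι) (a b : ι → ℝ) (e f : ι → ℂ) :
    ‖(∑ t ∈ s, (a t : ℂ) * e t) * ∑ t ∈ s, (b t : ℂ) * f t‖ ^ 2 =
      ∑ q ∈ (s ×ˢ s ×ˢ s) ×ˢ s, a q.1.1 * b q.1.2.1 * a q.1.2.2 * b q.2 *
        (e q.1.1 * f q.1.2.1 * conj (e q.1.2.2) * conj (f q.2)).re := by
  set z := (∑ t ∈ s, (a t : ℂ) * e t) * ∑ t ∈ s, (b t : ℂ) * f t
  calc ‖z‖ ^ 2 = (z * conj z).re := by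
        rw [Complex.mul_conj, Complex.ofReal_re, Complex.normSq_eq_norm_sq]
    _ = (∑ q ∈ (s ×ˢ s ×ˢ s) ×ˢ s, ((a q.1.1 * b q.1.2.1 * a q.1.2.2 * b q.2 : ℝ) : ℂ) *
          (e q.1.1 * f q.1.2.1 * conj (e q.1.2.2) * conj (f q.2))).re := by
        simp only [z, map_mul, map_sum, Complex.conj_ofReal, ← mul_assoc,
          sum_mul_sum_mul_sum_mul_sum]
        congr 1
        refine sum_congr rfl fun q _ => ?_
        push_cast
        ring
    _ = _ := by simp only [Complex.re_sum, Complex.re_ofReal_mul]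

section Moments

variable {Ω : Type*} [MeasurableSpace Ω] {μ : Measure Ω}

lemma integrable_mul_mul_mul_of_memLp_four {f g h k : Ω → ℝ} (hf : MemLp f 4 μ)
    (hg : MemLp g 4 μ) (hh : MemLp h 4 μ) (hk : MemLp k 4 μ) :
    Integrable (fun x => f x * g x * h x * k x) μ := by
  simpa only [Pi.mul_def, mul_assoc] using
    (hg.mul' hf (r := 2)).integrable_mul (hk.mul' hh (r := 2))

variable {ι : Type*} (s : Finset ι) {Y Z : ι → Ω → ℝ}

lemma integrable_norm_sq_sum_mul_sum (e f : ι → ℂ)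
    (hint : ∀ t u v w, Integrable (fun x => Y t x * Z u x * Y v x * Z w x) μ) :
    Integrable (fun x => ‖(∑ t ∈ s, (Y t x : ℂ) * e t) * ∑ t ∈ s, (Z t x : ℂ) * f t‖ ^ 2) μ := by
  simp only [norm_sq_sum_mul_sum]
  exact integrable_finsetSum _ fun q _ => (hint _ _ _ _).mul_const _

lemma integral_norm_sq_sum_mul_sum_le {e f : ι → ℂ} (he : ∀ t, ‖e t‖ ≤ 1) (hf : ∀ t, ‖f t‖ ≤ 1)
    (hint : ∀ t u v w, Integrable (fun x => Y t x * Z u x * Y v x * Z w x) μ) :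
    ∫ x, ‖(∑ t ∈ s, (Y t x : ℂ) * e t) * ∑ t ∈ s, (Z t x : ℂ) * f t‖ ^ 2 ∂μ ≤
      ∑ q ∈ (s ×ˢ s ×ˢ s) ×ˢ s, |∫ x, Y q.1.1 x * Z q.1.2.1 x * Y q.1.2.2 x * Z q.2 x ∂μ| := by
  simp only [norm_sq_sum_mul_sum]
  rw [integral_finsetSum _ fun q _ => (hint _ _ _ _).mul_const _]
  refine sum_le_sum fun q _ => ?_
  rw [integral_mul_const]
  set φ := e q.1.1 * f q.1.2.1 * conj (e q.1.2.2) * conj (f q.2)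
  have hφ : |φ.re| ≤ 1 := by
    refine (Complex.abs_re_le_norm φ).trans ?_
    simp only [φ, norm_mul, Complex.norm_conj]
    exact mul_le_one₀ (mul_le_one₀ (mul_le_one₀ (he _) (norm_nonneg _) (hf _)) (by positivity)
      (he _)) (by positivity) (hf _)
  calc _ ≤ |(∫ x, Y q.1.1 x * Z q.1.2.1 x * Y q.1.2.2 x * Z q.2 x ∂μ) * φ.re| := le_abs_self _
    _ ≤ _ := by rw [abs_mul]; exact mul_le_of_le_one_right (abs_nonneg _) hφ

end Moments

lemma sum_abs_le_card_mul_tsum_of_shift_invariant (κ : ℤ → ℤ → ℤ → ℤ → ℝ)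
    (hκ : ∀ u₁ u₂ u₃ u₄, κ u₁ u₂ u₃ u₄ = κ (u₁ - u₄) (u₂ - u₄) (u₃ - u₄) 0)
    (hsum : Summable fun t : ℤ × ℤ × ℤ => |κ t.1 t.2.1 t.2.2 0|) (s : Finset ℕ) :
    ∑ q ∈ (s ×ˢ s ×ˢ s) ×ˢ s, |κ q.1.1 q.1.2.1 q.1.2.2 q.2| ≤
      #s * ∑' t : ℤ × ℤ × ℤ, |κ t.1 t.2.1 t.2.2 0| := by
  rw [sum_product_right, ← nsmul_eq_mul, ← sum_const]
  refine sum_le_sum fun w _ => ?_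
  set shift : ℕ × ℕ × ℕ → ℤ × ℤ × ℤ := fun r => (r.1 - w, r.2.1 - w, r.2.2 - w)
  have hshift : shift.Injective := fun r r' h => by
    simp only [shift, Prod.mk.injEq] at h
    ext <;> omega
  calc ∑ r ∈ s ×ˢ s ×ˢ s, |κ r.1 r.2.1 r.2.2 w|
      = ∑ t ∈ (s ×ˢ s ×ˢ s).image shift, |κ t.1 t.2.1 t.2.2 0| := by
        rw [sum_image hshift.injOn]
        exact sum_congr rfl fun r _ => by rw [hκ]
    _ ≤ _ := hsum.sum_le_tsum _ fun _ _ => abs_nonneg _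

section Periodogram

variable {Ω : Type*}

def dft (X : ℤ → Ω → ℝ) (T : ℕ) (ω : ℝ) (x : Ω) : ℂ :=
  (1 / Real.sqrt (2 * π * T) : ℝ) *
    ∑ t ∈ range T, ((X t x : ℂ) * Complex.exp (-(Complex.I * ω * t)))

def periodogram (Y Z : ℤ → Ω → ℝ) (T : ℕ) (ω : ℝ) (x : Ω) : ℂ :=
  dft Y T ω x * dft Z T (-ω) x

variable {Y Z : ℤ → Ω → ℝ} (T : ℕ) (ω : ℝ)

lemma norm_sq_periodogram (x : Ω) :
    ‖periodogram Y Z T ω x‖ ^ 2 =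
      ‖(∑ t ∈ range T, (Y t x : ℂ) * Complex.exp (-(Complex.I * ω * t))) *
          ∑ t ∈ range T, (Z t x : ℂ) * Complex.exp (-(Complex.I * (-ω : ℝ) * t))‖ ^ 2 /
        (2 * π * T) ^ 2 := by
  have hc : ‖((1 / √(2 * π * T) : ℝ) : ℂ)‖ ^ 2 = 1 / (2 * π * T) := by
    rw [Complex.norm_real, Real.norm_eq_abs, sq_abs, div_pow, one_pow,
      Real.sq_sqrt (by positivity)]
  simp only [periodogram, dft, norm_mul, mul_pow, hc]
  ring

lemma norm_exp_neg_I_mul_le_one (t : ℕ) : ‖Complex.exp (-(Complex.I * ω * t))‖ ≤ 1 := by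
  simp [Complex.norm_exp]

variable [MeasurableSpace Ω] {μ : Measure Ω}
variable (hY4 : ∀ t, MemLp (Y t) 4 μ) (hZ4 : ∀ t, MemLp (Z t) 4 μ)
include hY4 hZ4

lemma integrable_norm_sq_periodogram :
    Integrable (fun x => ‖periodogram Y Z T ω x‖ ^ 2) μ := by
  simp only [norm_sq_periodogram]
  exact (integrable_norm_sq_sum_mul_sum _ _ _ fun _ _ _ _ =>
    integrable_mul_mul_mul_of_memLp_four (hY4 _) (hZ4 _) (hY4 _) (hZ4 _)).div_const _

lemma integral_norm_sq_periodogram_le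
    (hstat : ∀ u₁ u₂ u₃ u₄ : ℤ,
      ∫ x, Y u₁ x * Z u₂ x * Y u₃ x * Z u₄ x ∂μ
        = ∫ x, Y (u₁ - u₄) x * Z (u₂ - u₄) x * Y (u₃ - u₄) x * Z 0 x ∂μ)
    (hsum : Summable fun t : ℤ × ℤ × ℤ => |∫ x, Y t.1 x * Z t.2.1 x * Y t.2.2 x * Z 0 x ∂μ|) :
    ∫ x, ‖periodogram Y Z T ω x‖ ^ 2 ∂μ ≤
      T * (∑' t : ℤ × ℤ × ℤ, |∫ x, Y t.1 x * Z t.2.1 x * Y t.2.2 x * Z 0 x ∂μ|) /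
        (2 * π * T) ^ 2 := by
  simp only [norm_sq_periodogram]
  rw [integral_div]
  gcongr
  refine (integral_norm_sq_sum_mul_sum_le _ (norm_exp_neg_I_mul_le_one ω)
    (norm_exp_neg_I_mul_le_one (-ω)) fun _ _ _ _ =>
      integrable_mul_mul_mul_of_memLp_four (hY4 _) (hZ4 _) (hY4 _) (hZ4 _)).trans ?_
  simpa using sum_abs_le_card_mul_tsum_of_shift_invariant
    (fun u₁ u₂ u₃ u₄ => ∫ x, Y u₁ x * Z u₂ x * Y u₃ x * Z u₄ x ∂μ) hstat hsum (range T)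

end Periodogram

lemma integral_norm_sum_mul_conj_le {Ω ι : Type*} [MeasurableSpace Ω] {μ : Measure Ω}
    (K : Finset ι) {P P' : ι → Ω → ℂ} {M : ℝ}
    (hP : ∀ k, Integrable (fun x => ‖P k x‖ ^ 2) μ)
    (hP' : ∀ k, Integrable (fun x => ‖P' k x‖ ^ 2) μ)
    (hM : ∀ k, ∫ x, ‖P k x‖ ^ 2 ∂μ ≤ M) (hM' : ∀ k, ∫ x, ‖P' k x‖ ^ 2 ∂μ ≤ M) :
    ∫ x, ‖∑ k ∈ K, P k x * conj (P' k x)‖ ∂μ ≤ #K * M := by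
  have hpt : ∀ x, ‖∑ k ∈ K, P k x * conj (P' k x)‖ ≤
      ∑ k ∈ K, (‖P k x‖ ^ 2 + ‖P' k x‖ ^ 2) / 2 := fun x =>
    (norm_sum_le _ _).trans <| sum_le_sum fun k _ => by
      rw [norm_mul, Complex.norm_conj]
      linarith [two_mul_le_add_sq ‖P k x‖ ‖P' k x‖]
  have hint : ∀ k, Integrable (fun x => (‖P k x‖ ^ 2 + ‖P' k x‖ ^ 2) / 2) μ :=
    fun k => ((hP k).add (hP' k)).div_const 2
  calc ∫ x, ‖∑ k ∈ K, P k x * conj (P' k x)‖ ∂μ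
      ≤ ∫ x, ∑ k ∈ K, (‖P k x‖ ^ 2 + ‖P' k x‖ ^ 2) / 2 ∂μ :=
        integral_mono_of_nonneg (.of_forall fun _ => norm_nonneg _)
          (integrable_finsetSum _ fun k _ => hint k) (.of_forall hpt)
    _ = ∑ k ∈ K, ((∫ x, ‖P k x‖ ^ 2 ∂μ) + ∫ x, ‖P' k x‖ ^ 2 ∂μ) / 2 := by
        rw [integral_finsetSum _ fun k _ => hint k]
        simp only [integral_div, integral_add (hP _) (hP' _)]
    _ ≤ ∑ _k ∈ K, M := sum_le_sum fun k _ => by linarith [hM k, hM' k]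
    _ = #K * M := by rw [sum_const, nsmul_eq_mul]

lemma card_Icc_two_div_two_le (T : ℕ) : (#(Icc 2 (T / 2)) : ℝ) ≤ T / 2 := by
  rw [Nat.card_Icc]
  exact (Nat.cast_le.2 (by omega : T / 2 + 1 - 2 ≤ T / 2)).trans Nat.cast_div_le

theorem ST2_expectation_bound_general
    {Ω : Type*} [MeasureSpace Ω]
    (Y Z : ℤ → Ω → ℝ)
    (hY4 : ∀ t : ℤ, MemLp (Y t) 4) (hZ4 : ∀ t : ℤ, MemLp (Z t) 4)
    (hstat : ∀ u₁ u₂ u₃ u₄ : ℤ,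
      (∫ x, Y u₁ x * Z u₂ x * Y u₃ x * Z u₄ x)
        = ∫ x, Y (u₁ - u₄) x * Z (u₂ - u₄) x * Y (u₃ - u₄) x * Z 0 x)
    (T : ℕ) (hT : 1 ≤ T)
    (Yt Zt : ℝ → Ω → ℂ)
    (hYt : ∀ (ω : ℝ) (x : Ω), Yt ω x = (1 / Real.sqrt (2 * π * T) : ℝ) *
      ∑ t ∈ Finset.range T, ((Y t x : ℂ) * Complex.exp (-(Complex.I * ω * t))))
    (hZt : ∀ (ω : ℝ) (x : Ω), Zt ω x = (1 / Real.sqrt (2 * π * T) : ℝ) *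
      ∑ t ∈ Finset.range T, ((Z t x : ℂ) * Complex.exp (-(Complex.I * ω * t))))
    (p : ℝ → Ω → ℂ)
    (hp : ∀ (ω : ℝ) (x : Ω), p ω x = Yt ω x * Zt (-ω) x)
    (S2 : Ω → ℂ)
    (hS2 : ∀ x : Ω, S2 x = (2 / (T : ℂ)) *
      ∑ k ∈ Finset.Icc 2 (T / 2),
        p (2 * π * k / T) x * conj (p (2 * π * ((k : ℝ) - 1) / T) x))
    (Q : ℝ)
    (hQsum : Summable fun t : ℤ × ℤ × ℤ =>
      |∫ x, Y t.1 x * Z t.2.1 x * Y t.2.2 x * Z 0 x|)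
    (hQ : Q = ∑' t : ℤ × ℤ × ℤ, |∫ x, Y t.1 x * Z t.2.1 x * Y t.2.2 x * Z 0 x|) :
    Real.sqrt T * ∫ x, ‖S2 x‖ ≤ 7 * Q / (2 * π) ^ 2 := by
  obtain rfl : p = periodogram Y Z T := by
    ext ω x
    rw [hp, hYt, hZt]
    rfl
  have hT₁ : (1 : ℝ) ≤ T := by exact_mod_cast hT
  have hQ₀ : 0 ≤ Q := hQ ▸ tsum_nonneg fun _ => abs_nonneg _
  have hM : ∀ ω, ∫ x, ‖periodogram Y Z T ω x‖ ^ 2 ≤ T * Q / (2 * π * T) ^ 2 := fun ω =>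
    hQ ▸ integral_norm_sq_periodogram_le T ω hY4 hZ4 hstat hQsum
  have hS : ∫ x, ‖S2 x‖ ≤ Q / ((2 * π) ^ 2 * T) :=
    calc ∫ x, ‖S2 x‖
        = 2 / T * ∫ x, ‖∑ k ∈ Icc 2 (T / 2), periodogram Y Z T (2 * π * k / T) x *
            conj (periodogram Y Z T (2 * π * ((k : ℝ) - 1) / T) x)‖ := by
          simp only [hS2, norm_mul, norm_div, Complex.norm_natCast, Complex.norm_two]
          exact integral_const_mul _ _
      _ ≤ 2 / T * (#(Icc 2 (T / 2)) * (T * Q / (2 * π * T) ^ 2)) := by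
          gcongr
          exact integral_norm_sum_mul_conj_le _
            (fun _ => integrable_norm_sq_periodogram T _ hY4 hZ4)
            (fun _ => integrable_norm_sq_periodogram T _ hY4 hZ4) (fun _ => hM _) fun _ => hM _
      _ ≤ 2 / T * (T / 2 * (T * Q / (2 * π * T) ^ 2)) := by
          gcongr
          exact card_Icc_two_div_two_le T
      _ = Q / ((2 * π) ^ 2 * T) := by
          field_simp
  have hsqrt : √(T : ℝ) ≤ T := Real.sqrt_le_iff.2 ⟨by positivity, by nlinarith⟩
  calc √(T : ℝ) * ∫ x, ‖S2 x‖ ≤ T * (Q / ((2 * π) ^ 2 * T)) := by gcongr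
    _ = Q / (2 * π) ^ 2 := by field_simp
    _ ≤ 7 * Q / (2 * π) ^ 2 := by gcongr; linarith

/-- Let `(Y t)` and `(Z t)` be real random variables with finite fourth moments and jointly
fourth-order stationary mixed moments, `Ỹ_ω, Z̃_ω` their discrete Fourier transforms,
`p_ω = Ỹ_ω Z̃_{-ω}` the periodogram, and
`S_{T,2} = (2/T) ∑_{k=2}^{⌊T/2⌋} p_{ω_k} conj(p_{ω_{k-1}})` with `ω_k = 2πk/T`.  Then for
every `T ≥ 1`, `√T · E|S_{T,2}| ≤ 7 Q / (2π)²`, where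
`Q = ∑_{t₁,t₂,t₃ ∈ ℤ} |E[Y_{t₁} Z_{t₂} Y_{t₃} Z_0]|` is assumed finite. -/
theorem ST2_expectation_bound
    {Ω : Type*} [MeasureSpace Ω] [IsProbabilityMeasure (volume : Measure Ω)]
    (Y Z : ℤ → Ω → ℝ)
    (hYmeas : ∀ t : ℤ, Measurable (Y t)) (hZmeas : ∀ t : ℤ, Measurable (Z t))
    (hY4 : ∀ t : ℤ, MemLp (Y t) 4) (hZ4 : ∀ t : ℤ, MemLp (Z t) 4)
    (hstat : ∀ u₁ u₂ u₃ u₄ : ℤ,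
      (∫ x, Y u₁ x * Z u₂ x * Y u₃ x * Z u₄ x)
        = ∫ x, Y (u₁ - u₄) x * Z (u₂ - u₄) x * Y (u₃ - u₄) x * Z 0 x)
    (T : ℕ) (hT : 1 ≤ T)
    (Yt Zt : ℝ → Ω → ℂ)
    (hYt : ∀ (ω : ℝ) (x : Ω), Yt ω x = (1 / Real.sqrt (2 * π * T) : ℝ) *
      ∑ t ∈ Finset.range T, ((Y t x : ℂ) * Complex.exp (-(Complex.I * ω * t))))
    (hZt : ∀ (ω : ℝ) (x : Ω), Zt ω x = (1 / Real.sqrt (2 * π * T) : ℝ) *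
      ∑ t ∈ Finset.range T, ((Z t x : ℂ) * Complex.exp (-(Complex.I * ω * t))))
    (p : ℝ → Ω → ℂ)
    (hp : ∀ (ω : ℝ) (x : Ω), p ω x = Yt ω x * Zt (-ω) x)
    (S2 : Ω → ℂ)
    (hS2 : ∀ x : Ω, S2 x = (2 / (T : ℂ)) *
      ∑ k ∈ Finset.Icc 2 (T / 2),
        p (2 * π * k / T) x * conj (p (2 * π * ((k : ℝ) - 1) / T) x))
    (Q : ℝ)
    (hQsum : Summable fun t : ℤ × ℤ × ℤ =>
      |∫ x, Y t.1 x * Z t.2.1 x * Y t.2.2 x * Z 0 x|)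
    (hQ : Q = ∑' t : ℤ × ℤ × ℤ, |∫ x, Y t.1 x * Z t.2.1 x * Y t.2.2 x * Z 0 x|) :
    Real.sqrt T * ∫ x, ‖S2 x‖ ≤ 7 * Q / (2 * π) ^ 2 :=
  ST2_expectation_bound_general Y Z hY4 hZ4 hstat T hT Yt Zt hYt hZt p hp S2 hS2 Q hQsum hQ
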